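/- Let z be a complex random variable with mean 0 and variance 1, and let z₁, z₂ be independent copies of z. Then there exists a constant C ≥ 1 such that Pr(C⁻¹ ≤ |z₁ - z₂| ≤ C) ≥ C⁻¹. -/

import Mathlib

open MeasureTheory ProbabilityTheory Filter Set Topology

lemma norm_sub_sq_complex (a b : ℂ) :
    ‖a - b‖ ^ 2 = ‖a‖ ^ 2 + ‖b‖ ^ 2 - 2 * (a.re * b.re + a.im * b.im) := by
  simp only [Complex.sq_norm, Complex.normSq_apply, Complex.sub_re,
    Complex.sub_im]
  ring

/-- a complex random variable with mean 0 and variance 1 is `C`-good for some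
`C ≥ 1`: if `z₁, z₂` are independent copies of `z`, then
`Pr(C⁻¹ ≤ |z₁ - z₂| ≤ C) ≥ C⁻¹`. -/
theorem stmt_0
    {Ω : Type*} [MeasurableSpace Ω] (μ : Measure Ω) [IsProbabilityMeasure μ]
    (z z₁ z₂ : Ω → ℂ)
    (hzm : Measurable z) (hz₁m : Measurable z₁) (hz₂m : Measurable z₂)
    (hint : Integrable z μ) (hint2 : Integrable (fun ω => ‖z ω‖ ^ 2) μ)
    (hmean : ∫ ω, z ω ∂μ = 0) (hvar : ∫ ω, ‖z ω‖ ^ 2 ∂μ = 1)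
    (hcopy₁ : Measure.map z₁ μ = Measure.map z μ)
    (hcopy₂ : Measure.map z₂ μ = Measure.map z μ)
    (hindep : IndepFun z₁ z₂ μ) :
    ∃ C : ℝ, 1 ≤ C ∧
      ENNReal.ofReal C⁻¹ ≤ μ {ω | C⁻¹ ≤ ‖z₁ ω - z₂ ω‖ ∧ ‖z₁ ω - z₂ ω‖ ≤ C} := by
  have hnm : Measurable fun c : ℂ => ‖c‖ ^ 2 := (measurable_norm.pow_const 2)
  -- transfer integrability and integrals to z₁, z₂
  have key : ∀ (w : Ω → ℂ), Measurable w → Measure.map w μ = Measure.map z μ →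
      (Integrable w μ ∧ (∫ ω, w ω ∂μ) = 0) ∧
      (Integrable (fun ω => ‖w ω‖ ^ 2) μ ∧ (∫ ω, ‖w ω‖ ^ 2 ∂μ) = 1) := by
    intro w hwm hcopy
    constructor
    · constructor
      · rw [show w = (id : ℂ → ℂ) ∘ w from rfl,
          ← integrable_map_measure aestronglyMeasurable_id hwm.aemeasurable, hcopy,
          integrable_map_measure aestronglyMeasurable_id hzm.aemeasurable]
        exact hint
      · calc ∫ ω, w ω ∂μ = ∫ c, c ∂(Measure.map w μ) :=
              (integral_map hwm.aemeasurable aestronglyMeasurable_id).symm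
          _ = ∫ c, c ∂(Measure.map z μ) := by rw [hcopy]
          _ = ∫ ω, z ω ∂μ := integral_map hzm.aemeasurable aestronglyMeasurable_id
          _ = 0 := hmean
    · constructor
      · rw [show (fun ω => ‖w ω‖ ^ 2) = (fun c : ℂ => ‖c‖ ^ 2) ∘ w from rfl,
          ← integrable_map_measure hnm.aestronglyMeasurable hwm.aemeasurable, hcopy,
          integrable_map_measure hnm.aestronglyMeasurable hzm.aemeasurable]
        exact hint2
      · calc ∫ ω, ‖w ω‖ ^ 2 ∂μ = ∫ c, ‖c‖ ^ 2 ∂(Measure.map w μ) :=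
              (integral_map hwm.aemeasurable hnm.aestronglyMeasurable).symm
          _ = ∫ c, ‖c‖ ^ 2 ∂(Measure.map z μ) := by rw [hcopy]
          _ = ∫ ω, ‖z ω‖ ^ 2 ∂μ := integral_map hzm.aemeasurable hnm.aestronglyMeasurable
          _ = 1 := hvar
  obtain ⟨⟨hz₁int, hz₁mean⟩, ⟨hz₁sq, hz₁var⟩⟩ := key z₁ hz₁m hcopy₁
  obtain ⟨⟨hz₂int, hz₂mean⟩, ⟨hz₂sq, hz₂var⟩⟩ := key z₂ hz₂m hcopy₂
  -- real and imaginary parts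
  have hre₁ : Integrable (fun ω => (z₁ ω).re) μ := hz₁int.re
  have hre₂ : Integrable (fun ω => (z₂ ω).re) μ := hz₂int.re
  have him₁ : Integrable (fun ω => (z₁ ω).im) μ := hz₁int.im
  have him₂ : Integrable (fun ω => (z₂ ω).im) μ := hz₂int.im
  have hmre₁ : ∫ ω, (z₁ ω).re ∂μ = 0 := by
    have := integral_re (𝕜 := ℂ) hz₁int
    simpa [hz₁mean] using this
  have hmre₂ : ∫ ω, (z₂ ω).re ∂μ = 0 := by
    have := integral_re (𝕜 := ℂ) hz₂int
    simpa [hz₂mean] using this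
  have hmim₁ : ∫ ω, (z₁ ω).im ∂μ = 0 := by
    have := integral_im (𝕜 := ℂ) hz₁int
    simpa [hz₁mean] using this
  have hmim₂ : ∫ ω, (z₂ ω).im ∂μ = 0 := by
    have := integral_im (𝕜 := ℂ) hz₂int
    simpa [hz₂mean] using this
  -- cross terms vanish by independence
  have hire : IndepFun (fun ω => (z₁ ω).re) (fun ω => (z₂ ω).re) μ :=
    hindep.comp Complex.measurable_re Complex.measurable_re
  have hiim : IndepFun (fun ω => (z₁ ω).im) (fun ω => (z₂ ω).im) μ :=
    hindep.comp Complex.measurable_im Complex.measurable_im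
  have hcross_re_int : Integrable (fun ω => (z₁ ω).re * (z₂ ω).re) μ :=
    hire.integrable_mul hre₁ hre₂
  have hcross_im_int : Integrable (fun ω => (z₁ ω).im * (z₂ ω).im) μ :=
    hiim.integrable_mul him₁ him₂
  have hcross_re : ∫ ω, (z₁ ω).re * (z₂ ω).re ∂μ = 0 := by
    have := hire.integral_fun_mul_eq_mul_integral hre₁.aestronglyMeasurable hre₂.aestronglyMeasurable
    simpa [hmre₁, hmre₂] using this
  have hcross_im : ∫ ω, (z₁ ω).im * (z₂ ω).im ∂μ = 0 := by
    have := hiim.integral_fun_mul_eq_mul_integral him₁.aestronglyMeasurable him₂.aestronglyMeasurable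
    simpa [hmim₁, hmim₂] using this
  -- the function g
  set g : Ω → ℝ := fun ω => ‖z₁ ω - z₂ ω‖ ^ 2 with hgdef
  have hgm : Measurable g := ((hz₁m.sub hz₂m).norm).pow_const 2
  have hgnn : ∀ ω, 0 ≤ g ω := fun ω => sq_nonneg _
  have hpt : g = fun ω => ‖z₁ ω‖ ^ 2 + ‖z₂ ω‖ ^ 2 -
      2 * ((z₁ ω).re * (z₂ ω).re + (z₁ ω).im * (z₂ ω).im) := by
    funext ω; exact norm_sub_sq_complex _ _
  have hA : Integrable (fun ω => ‖z₁ ω‖ ^ 2 + ‖z₂ ω‖ ^ 2) μ := hz₁sq.add hz₂sq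
  have hC : Integrable (fun ω => (z₁ ω).re * (z₂ ω).re + (z₁ ω).im * (z₂ ω).im) μ :=
    hcross_re_int.add hcross_im_int
  have hB : Integrable (fun ω => 2 * ((z₁ ω).re * (z₂ ω).re + (z₁ ω).im * (z₂ ω).im)) μ :=
    hC.const_mul 2
  have hgint : Integrable g μ := by
    rw [hpt]
    exact hA.sub hB
  have hg2 : ∫ ω, g ω ∂μ = 2 := by
    simp only [hpt]
    rw [integral_sub hA hB, integral_add hz₁sq hz₂sq, integral_const_mul 2,
      integral_add hcross_re_int hcross_im_int, hz₁var, hz₂var, hcross_re, hcross_im]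
    norm_num
  -- tail truncation
  set s : ℕ → Set Ω := fun n => {ω | g ω ≤ n} with hsdef
  have hsm : ∀ n, MeasurableSet (s n) := fun n => measurableSet_le hgm measurable_const
  have hmono : Monotone s := by
    intro m n hmn ω hω
    simp only [hsdef, Set.mem_setOf_eq] at hω ⊢
    exact hω.trans (by exact_mod_cast hmn)
  have hunion : (⋃ n, s n) = univ := by
    ext ω; simp only [mem_iUnion, mem_univ, iff_true, hsdef, mem_setOf_eq]
    exact exists_nat_ge (g ω)
  have htends : Tendsto (fun n => ∫ ω in s n, g ω ∂μ) atTop (𝓝 2) := by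
    have := tendsto_setIntegral_of_monotone hsm hmono
      (by rw [hunion]; exact hgint.integrableOn)
    rwa [hunion, setIntegral_univ, hg2] at this
  obtain ⟨N, hN⟩ := (htends.eventually (eventually_ge_nhds (by norm_num : (3:ℝ)/2 < 2))).exists
  -- bump N to N+1 to ensure ≥ 1
  set M : ℕ := N + 1 with hMdef
  have hNM : s N ⊆ s M := hmono (Nat.le_succ N)
  have hM1 : (1:ℝ) ≤ (M:ℝ) := by exact_mod_cast Nat.one_le_iff_ne_zero.2 (Nat.succ_ne_zero N)
  have hMint : (3:ℝ)/2 ≤ ∫ ω in s M, g ω ∂μ := by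
    refine le_trans hN (setIntegral_mono_set hgint.integrableOn
      (Eventually.of_forall hgnn) (HasSubset.Subset.eventuallyLE hNM))
  -- split s M into low and high parts
  set A : Set Ω := s M ∩ {ω | g ω < 1/2} with hAdef
  set B : Set Ω := s M ∩ {ω | 1/2 ≤ g ω} with hBdef
  have hAm : MeasurableSet A := (hsm M).inter (measurableSet_lt hgm measurable_const)
  have hBm : MeasurableSet B := (hsm M).inter (measurableSet_le measurable_const hgm)
  have hdisj : Disjoint A B := by
    refine Set.disjoint_left.2 fun ω hA hB => ?_
    have h1 : g ω < 1/2 := hA.2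
    have h2 : 1/2 ≤ g ω := hB.2
    exact absurd h2 (not_le.2 h1)
  have hABu : A ∪ B = s M := by
    rw [hAdef, hBdef, ← Set.inter_union_distrib_left]
    have : {ω | g ω < 1/2} ∪ {ω | 1/2 ≤ g ω} = univ := by
      ext ω; simp [lt_or_ge]
    rw [this, Set.inter_univ]
  have hsplit : ∫ ω in s M, g ω ∂μ = (∫ ω in A, g ω ∂μ) + ∫ ω in B, g ω ∂μ := by
    rw [← hABu]
    exact setIntegral_union hdisj hBm hgint.integrableOn hgint.integrableOn
  have hAle : ∫ ω in A, g ω ∂μ ≤ 1/2 := by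
    calc ∫ ω in A, g ω ∂μ ≤ ∫ _ in A, (1:ℝ)/2 ∂μ := by
          refine setIntegral_mono_on hgint.integrableOn (integrableOn_const ?_) hAm ?_
          · exact measure_ne_top μ A
          · intro ω hω; exact le_of_lt hω.2
      _ = (μ A).toReal * (1/2) := by rw [setIntegral_const]; simp [smul_eq_mul, Measure.real]
      _ ≤ 1 * (1/2) := by
          gcongr
          exact ENNReal.toReal_le_of_le_ofReal (by norm_num) (by simpa using prob_le_one (μ := μ) (s := A))
      _ = 1/2 := by norm_num
  have hBle : ∫ ω in B, g ω ∂μ ≤ (μ B).toReal * M := by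
    calc ∫ ω in B, g ω ∂μ ≤ ∫ _ in B, (M:ℝ) ∂μ := by
          refine setIntegral_mono_on hgint.integrableOn (integrableOn_const ?_) hBm ?_
          · exact measure_ne_top μ B
          · intro ω hω; exact hω.1
      _ = (μ B).toReal * M := by rw [setIntegral_const]; simp [smul_eq_mul, Measure.real]
  have hBlow : 1 ≤ (μ B).toReal * M := by
    have := hsplit ▸ hMint
    linarith
  -- choose C
  refine ⟨2 * M, by linarith, ?_⟩
  have hCpos : (0:ℝ) < 2 * M := by linarith
  have hsub : B ⊆ {ω | (2 * (M:ℝ))⁻¹ ≤ ‖z₁ ω - z₂ ω‖ ∧ ‖z₁ ω - z₂ ω‖ ≤ 2 * M} := by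
    intro ω hω
    obtain ⟨h1, h2⟩ := hω
    have hgle : g ω ≤ (M:ℝ) := h1
    have hgge : (1:ℝ)/2 ≤ g ω := h2
    have hx : (0:ℝ) ≤ ‖z₁ ω - z₂ ω‖ := norm_nonneg _
    have hx2 : g ω = ‖z₁ ω - z₂ ω‖ ^ 2 := rfl
    constructor
    · have hhalf : (1:ℝ)/2 ≤ ‖z₁ ω - z₂ ω‖ := by nlinarith
      have : (2 * (M:ℝ))⁻¹ ≤ 1/2 := by
        rw [inv_le_comm₀ hCpos (by norm_num)]
        linarith
      linarith
    · nlinarith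
  have hμB : ENNReal.ofReal (2 * (M:ℝ))⁻¹ ≤ μ B := by
    refine ENNReal.ofReal_le_of_le_toReal ?_
    have hMpos : (0:ℝ) < (M:ℝ) := by linarith
    have ht : (1:ℝ)/(M:ℝ) ≤ (μ B).toReal := by
      rw [div_le_iff₀ hMpos]; linarith
    have h2 : (1:ℝ)/(2*(M:ℝ)) ≤ 1/(M:ℝ) :=
      one_div_le_one_div_of_le hMpos (by linarith)
    rw [inv_eq_one_div]
    linarith
  exact le_trans hμB (measure_mono hsub)
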